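/- arXiv:2503.05007 — 3 statements merged into one kernel-verified Lean document; each statement's English description precedes it below -/
import Mathlib

section
/- Let S be a finite set of distinct integers and F_S the planar point set obtained by mapping each s in S to (rank(s), s). Let ℓ be a line with slope at least 1. Define L as the set obtained by shifting each point of F_S down by ε and right by ε, and U as the set obtained by shifting each point up by ε and left by ε. Then every point of F_S lies within L∞-distance ε of ℓ if and only if ℓ lies (weakly) below every point of U and (weakly) above every point of L. -/
/-- `rankOf S s` is the (1-based) rank of `s` in the sorted order of `S`. -/
def rankOf (S : Finset ℤ) (s : ℤ) : ℕ := (S.filter (· ≤ s)).card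

/-- A line `y = m x + b` with slope `m ≥ 1` is within `L∞`-distance `ε` of every point of
`F_S = {(rank s, s) : s ∈ S}` iff it lies weakly below every ε-up-left shift and weakly above
every ε-down-right shift of the points of `F_S`. -/
theorem stmt0 (S : Finset ℤ) (ε : ℕ) (hε : 0 < ε) (m b : ℝ) (hm : 1 ≤ m) :
    (∀ s ∈ S, ∃ q : ℝ × ℝ, q.2 = m * q.1 + b ∧
        max |(rankOf S s : ℝ) - q.1| |(s : ℝ) - q.2| ≤ ε) ↔
    (∀ s ∈ S,
      m * ((rankOf S s : ℝ) - ε) + b ≤ (s : ℝ) + ε ∧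
      (s : ℝ) - ε ≤ m * ((rankOf S s : ℝ) + ε) + b) := by
  have hm0 : (0:ℝ) < m := lt_of_lt_of_le one_pos hm
  have hε0 : (0:ℝ) ≤ (ε:ℝ) := Nat.cast_nonneg ε
  constructor
  · intro h s hs
    obtain ⟨q, hq, hmax⟩ := h s hs
    set x : ℝ := (rankOf S s : ℝ)
    have h1 : |x - q.1| ≤ ε := le_trans (le_max_left _ _) hmax
    have h2 : |(s:ℝ) - q.2| ≤ ε := le_trans (le_max_right _ _) hmax
    rw [abs_le] at h1 h2
    constructor
    · have : m * (x - ε) ≤ m * q.1 := by nlinarith [h1.1, h1.2]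
      nlinarith [h2.1, h2.2]
    · have : m * q.1 ≤ m * (x + ε) := by nlinarith [h1.1, h1.2]
      nlinarith [h2.1, h2.2]
  · intro h s hs
    obtain ⟨h1, h2⟩ := h s hs
    set x : ℝ := (rankOf S s : ℝ)
    set q1 : ℝ := max (x - ε) (((s:ℝ) - ε - b) / m)
    refine ⟨(q1, m * q1 + b), rfl, ?_⟩
    have hq1le : q1 ≤ x + ε := by
      apply max_le
      · linarith
      · rw [div_le_iff₀ hm0]; nlinarith
    have hq1ge : x - ε ≤ q1 := le_max_left _ _
    have hyle : (s:ℝ) - ε ≤ m * q1 + b := by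
      have : ((s:ℝ) - ε - b) / m ≤ q1 := le_max_right _ _
      rw [div_le_iff₀ hm0] at this
      nlinarith
    have hyge : m * q1 + b ≤ (s:ℝ) + ε := by
      have hb1 : m * (x - ε) + b ≤ (s:ℝ) + ε := h1
      have hb2 : m * (((s:ℝ) - ε - b) / m) + b ≤ (s:ℝ) + ε := by
        rw [mul_div_cancel₀ _ (ne_of_gt hm0)]; linarith
      rcases max_cases (x - ε) (((s:ℝ) - ε - b) / m) with ⟨hq, _⟩ | ⟨hq, _⟩ <;>
        simp only [q1, hq] <;> [exact hb1; exact hb2]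
    simp only [max_le_iff, abs_le]
    constructor <;> constructor <;> linarith
end

section
/- Let a, b, c, d be points in the plane with segments α = (a,b) and β = (c,d) both having positive slope, and slope(α) < slope(β). Then c lies weakly to the right of the intersection point of line(α) and line(β) if and only if the ordered triple (a, b, c) makes a counter-clockwise turn or is collinear, i.e. (b.x − a.x)(c.y − b.y) − (c.x − b.x)(b.y − a.y) ≥ 0. -/
/-- For segments `α = (a,b)` and `β = (c,d)` of positive slope with
`slope α < slope β`, the point `c` lies weakly right of the intersection point `s`
of the two supporting lines iff `(a,b,c)` turns counter-clockwise or is collinear,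
i.e. the orientation determinant is nonnegative. -/
theorem stmt3 (a b c d : ℝ × ℝ)
    (hab : a.1 < b.1) (hcd : c.1 < d.1)
    (hαpos : 0 < (b.2 - a.2) / (b.1 - a.1))
    (hslope : (b.2 - a.2) / (b.1 - a.1) < (d.2 - c.2) / (d.1 - c.1))
    (s : ℝ × ℝ)
    (hs1 : (b.1 - a.1) * (s.2 - a.2) = (b.2 - a.2) * (s.1 - a.1))
    (hs2 : (d.1 - c.1) * (s.2 - c.2) = (d.2 - c.2) * (s.1 - c.1)) :
    s.1 ≤ c.1 ↔ 0 ≤ (b.1 - a.1) * (c.2 - b.2) - (c.1 - b.1) * (b.2 - a.2) := by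
  have hdx1 : 0 < b.1 - a.1 := sub_pos.mpr hab
  have hdx2 : 0 < d.1 - c.1 := sub_pos.mpr hcd
  have hK : 0 < (b.1 - a.1) * (d.2 - c.2) - (d.1 - c.1) * (b.2 - a.2) := by
    rw [div_lt_div_iff₀ hdx1 hdx2] at hslope
    nlinarith
  have key : (d.1 - c.1) * ((b.1 - a.1) * (c.2 - b.2) - (c.1 - b.1) * (b.2 - a.2))
      = ((b.1 - a.1) * (d.2 - c.2) - (d.1 - c.1) * (b.2 - a.2)) * (c.1 - s.1) := by
    linear_combination (d.1 - c.1) * hs1 - (b.1 - a.1) * hs2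
  constructor
  · intro h
    nlinarith
  · intro h
    nlinarith
end

section
/- Let S be a finite set of distinct integers, ε a positive integer, and suppose f is an ε-cover of S of minimum complexity (minimum number of segments). If k denotes the minimum complexity of any PGM index of S with parameter ε, then f contains at most k segments. (More precisely, the minimum ε-cover complexity is at most the minimum PGM index complexity.) -/
/-- Points and segments in the plane. -/
abbrev Pt := ℝ × ℝ
abbrev Seg := Pt × Pt

/-- Membership of a point on a segment. -/
def onSeg (σ : Seg) (p : Pt) : Prop :=
  ∃ t : ℝ, 0 ≤ t ∧ t ≤ 1 ∧ p = σ.1 + t • (σ.2 - σ.1)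

/-- A PGM index of `S` with parameter `ε`: a set of y-monotone segments such that for every
point `p = (rank s, s)` of `F_S`, the horizontal segment of width `ε` centered at `p`
intersects at least one segment. -/
def IsPGM (S : Finset ℤ) (ε : ℕ) (G : Finset Seg) : Prop :=
  (∀ σ ∈ G, σ.1.2 ≤ σ.2.2) ∧
  ∀ s ∈ S, ∃ σ ∈ G, ∃ q : Pt, onSeg σ q ∧ q.2 = (s : ℝ) ∧ |q.1 - (rankOf S s : ℝ)| ≤ ε

/-- An `ε`-cover of `S`: a set of segments of slope at least 1 such that every point of
`F_S` is within `L∞`-distance `ε` of some segment. -/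
def IsCover (S : Finset ℤ) (ε : ℕ) (F : Finset Seg) : Prop :=
  (∀ σ ∈ F, σ.1.1 < σ.2.1 ∧ σ.2.1 - σ.1.1 ≤ σ.2.2 - σ.1.2) ∧
  ∀ s ∈ S, ∃ σ ∈ F, ∃ q : Pt, onSeg σ q ∧
    max |(rankOf S s : ℝ) - q.1| |(s : ℝ) - q.2| ≤ ε

/-!
Each segment `σ` of a PGM index is replaced by a single steep segment. If `σ` serves the points
`(rank s, s)` for `s ∈ T` and `b` is its inverse slope, then `|Δ rank - b Δ s| ≤ 2ε` on `T`.
Ranks satisfy `0 ≤ Δ rank ≤ Δ s`, so `b` can be replaced by some `c ∈ (0, 1]`: `c = b` if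
`b ∈ (0, 1]`, `c = 1` if `b > 1`, and a small `c > 0` if `b ≤ 0`, where the ranks on `T` span
at most `2ε`. Centring the line `x = α + c y` in the resulting strip of horizontal width `2ε`
puts every point within horizontal distance `ε` of it, and a long enough piece of this line has
slope `1 / c ≥ 1`.
-/

def IsSteep (τ : Seg) : Prop :=
  τ.1.1 < τ.2.1 ∧ τ.2.1 - τ.1.1 ≤ τ.2.2 - τ.1.2

theorem onSeg.fst_sub_fst {σ : Seg} {p q : Pt} (hp : onSeg σ p) (hq : onSeg σ q)
    (hpq : p.2 ≠ q.2) :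
    q.1 - p.1 = (σ.2.1 - σ.1.1) / (σ.2.2 - σ.1.2) * (q.2 - p.2) := by
  obtain ⟨u, -, -, rfl⟩ := hp
  obtain ⟨v, -, -, rfl⟩ := hq
  simp only [Prod.fst_add, Prod.snd_add, Prod.smul_fst, Prod.smul_snd, Prod.fst_sub,
    Prod.snd_sub, smul_eq_mul] at hpq ⊢
  have hσ : σ.2.2 - σ.1.2 ≠ 0 := fun h => hpq (by simp [h])
  field_simp
  ring

theorem onSeg_of_mem_Icc {α c lo hi v : ℝ} (hlo : lo < hi) (hv : v ∈ Set.Icc lo hi) :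
    onSeg ((α + c * lo, lo), (α + c * hi, hi)) (α + c * v, v) := by
  have hne : hi - lo ≠ 0 := (sub_pos.mpr hlo).ne'
  refine ⟨(v - lo) / (hi - lo), div_nonneg (by linarith [hv.1]) (by linarith),
    (div_le_one (by linarith)).mpr (by linarith [hv.2]), ?_⟩
  ext <;> simp only [Prod.fst_add, Prod.snd_add, Prod.smul_fst, Prod.smul_snd, Prod.fst_sub,
    Prod.snd_sub, smul_eq_mul] <;> field_simp <;> ring

section

variable {ι : Type*} {T : Finset ι} {x y : ι → ℝ}

theorem exists_abs_sub_le_of_sub_le {f : ι → ℝ} {δ : ℝ}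
    (hf : ∀ s ∈ T, ∀ t ∈ T, f t - f s ≤ 2 * δ) : ∃ α, ∀ s ∈ T, |f s - α| ≤ δ := by
  rcases T.eq_empty_or_nonempty with rfl | hT
  · exact ⟨0, by simp⟩
  obtain ⟨p, hp, hmax⟩ := T.exists_max_image f hT
  obtain ⟨r, hr, hmin⟩ := T.exists_min_image f hT
  refine ⟨(f p + f r) / 2, fun s hs => abs_le.mpr ⟨?_, ?_⟩⟩ <;>
    linarith [hf r hr p hp, hmax s hs, hmin s hs]

theorem exists_slope_of_onSeg {σ : Seg} {ε : ℝ} (hxy : ∀ s ∈ T, ∀ t ∈ T, y s = y t → x s = x t)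
    (hq : ∀ s ∈ T, ∃ q, onSeg σ q ∧ q.2 = y s ∧ |q.1 - x s| ≤ ε) :
    ∃ b, ∀ s ∈ T, ∀ t ∈ T, |x t - x s - b * (y t - y s)| ≤ 2 * ε := by
  refine ⟨(σ.2.1 - σ.1.1) / (σ.2.2 - σ.1.2), fun s hs t ht => ?_⟩
  obtain ⟨p, hp, hp2, hps⟩ := hq s hs
  obtain ⟨q, hq, hq2, hqt⟩ := hq t ht
  by_cases hst : y s = y t
  · rw [hxy s hs t ht hst, hst]
    simpa using (abs_nonneg _).trans hps
  · rw [← hp2, ← hq2, ← hp.fst_sub_fst hq (by rwa [hp2, hq2])]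
    calc |x t - x s - (q.1 - p.1)| = |(p.1 - x s) - (q.1 - x t)| := by ring_nf
      _ ≤ |p.1 - x s| + |q.1 - x t| := abs_sub _ _
      _ ≤ 2 * ε := by linarith

theorem exists_lt_forall_mem_Icc (T : Finset ι) (y : ι → ℝ) :
    ∃ lo hi, lo < hi ∧ ∀ s ∈ T, y s ∈ Set.Icc lo hi := by
  obtain ⟨M, hM⟩ := (T.image y).bddAbove
  obtain ⟨m, hm⟩ := (T.image y).bddBelow
  refine ⟨m, max M (m + 1), lt_max_of_lt_right (lt_add_one m), fun s hs => ?_⟩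
  have hys : y s ∈ (T.image y : Set ℝ) := Finset.mem_coe.2 (Finset.mem_image_of_mem y hs)
  exact ⟨hm hys, le_max_of_le_left (hM hys)⟩

theorem exists_slope_mem_Ioc {b δ : ℝ} (hδ : 0 < δ)
    (hmono : ∀ s ∈ T, ∀ t ∈ T, y s ≤ y t → 0 ≤ x t - x s ∧ x t - x s ≤ y t - y s)
    (hb : ∀ s ∈ T, ∀ t ∈ T, |x t - x s - b * (y t - y s)| ≤ δ) :
    ∃ c, 0 < c ∧ c ≤ 1 ∧ ∀ s ∈ T, ∀ t ∈ T, |x t - x s - c * (y t - y s)| ≤ δ := by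
  suffices ∃ c, 0 < c ∧ c ≤ 1 ∧
      ∀ s ∈ T, ∀ t ∈ T, y s ≤ y t → |x t - x s - c * (y t - y s)| ≤ δ by
    obtain ⟨c, hc0, hc1, hc⟩ := this
    refine ⟨c, hc0, hc1, fun s hs t ht => ?_⟩
    rcases le_total (y s) (y t) with hst | hts
    · exact hc s hs t ht hst
    · rw [← abs_neg]
      convert hc t ht s hs hts using 2
      ring
  rcases le_or_gt b 0 with hb0 | hb0
  -- `x` then varies by at most `δ` on `T`, so any `c` with `c * (hi - lo) ≤ δ` works.
  · obtain ⟨lo, hi, hlohi, hy⟩ := exists_lt_forall_mem_Icc T y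
    set c := δ / (δ + (hi - lo))
    have hc0 : 0 < c := by positivity
    have hcD : c * (hi - lo) ≤ δ := by
      rw [div_mul_eq_mul_div, div_le_iff₀ (by linarith)]
      nlinarith
    refine ⟨c, hc0, (div_le_one (by linarith)).mpr (by linarith), fun s hs t ht hst => ?_⟩
    have hx := (hmono s hs t ht hst).1
    have hbst := abs_le.mp (hb s hs t ht)
    have hbΔ : b * (y t - y s) ≤ 0 := mul_nonpos_of_nonpos_of_nonneg hb0 (sub_nonneg.2 hst)
    have hcΔ : 0 ≤ c * (y t - y s) := mul_nonneg hc0.le (sub_nonneg.2 hst)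
    have hcΔD : c * (y t - y s) ≤ c * (hi - lo) :=
      mul_le_mul_of_nonneg_left (by linarith [(hy s hs).1, (hy t ht).2]) hc0.le
    exact abs_le.mpr ⟨by linarith, by linarith⟩
  rcases le_or_gt b 1 with hb1 | hb1
  · exact ⟨b, hb0, hb1, fun s hs t ht _ => hb s hs t ht⟩
  refine ⟨1, one_pos, le_rfl, fun s hs t ht hst => ?_⟩
  have hx := (hmono s hs t ht hst).2
  have hbst := abs_le.mp (hb s hs t ht)
  have hbΔ : y t - y s ≤ b * (y t - y s) := le_mul_of_one_le_left (sub_nonneg.2 hst) hb1.le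
  exact abs_le.mpr ⟨by linarith, by linarith⟩

theorem exists_steep_seg {c α ε : ℝ} (hc0 : 0 < c) (hc1 : c ≤ 1)
    (h : ∀ s ∈ T, |x s - (α + c * y s)| ≤ ε) :
    ∃ τ, IsSteep τ ∧ ∀ s ∈ T, ∃ q, onSeg τ q ∧ max |x s - q.1| |y s - q.2| ≤ ε := by
  obtain ⟨lo, hi, hlohi, hy⟩ := exists_lt_forall_mem_Icc T y
  refine ⟨((α + c * lo, lo), (α + c * hi, hi)), ⟨?_, ?_⟩, fun s hs =>
    ⟨_, onSeg_of_mem_Icc hlohi (hy s hs), by simpa using h s hs⟩⟩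
  · dsimp only
    nlinarith
  · dsimp only
    nlinarith

theorem exists_steep_seg_of_onSeg {σ : Seg} {ε : ℝ} (hε : 0 < ε)
    (hmono : ∀ s ∈ T, ∀ t ∈ T, y s ≤ y t → 0 ≤ x t - x s ∧ x t - x s ≤ y t - y s)
    (hq : ∀ s ∈ T, ∃ q, onSeg σ q ∧ q.2 = y s ∧ |q.1 - x s| ≤ ε) :
    ∃ τ, IsSteep τ ∧ ∀ s ∈ T, ∃ q, onSeg τ q ∧ max |x s - q.1| |y s - q.2| ≤ ε := by
  have hxy : ∀ s ∈ T, ∀ t ∈ T, y s = y t → x s = x t := fun s hs t ht h => by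
    linarith [(hmono s hs t ht h.le).1, (hmono t ht s hs h.ge).1]
  obtain ⟨b, hb⟩ := exists_slope_of_onSeg hxy hq
  obtain ⟨c, hc0, hc1, hc⟩ := exists_slope_mem_Ioc (by positivity) hmono hb
  obtain ⟨α, hα⟩ := exists_abs_sub_le_of_sub_le (f := fun s => x s - c * y s) (δ := ε)
    fun s hs t ht => by linarith [le_abs_self (x t - x s - c * (y t - y s)), hc s hs t ht]
  refine exists_steep_seg (α := α) hc0 hc1 fun s hs => ?_
  rw [show x s - (α + c * y s) = x s - c * y s - α by ring]
  exact hα s hs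

end

theorem rankOf_mono (S : Finset ℤ) : Monotone (rankOf S) := fun _ _ h =>
  Finset.card_le_card (Finset.monotone_filter_right S fun _ _ hu => hu.trans h)

theorem rankOf_sub_rankOf_le (S : Finset ℤ) {s t : ℤ} (h : s ≤ t) :
    (rankOf S t : ℤ) - rankOf S s ≤ t - s := by
  have hsub : S.filter (· ≤ t) ⊆ S.filter (· ≤ s) ∪ Finset.Ioc s t := by
    intro u hu
    simp only [Finset.mem_filter, Finset.mem_union, Finset.mem_Ioc] at hu ⊢
    rcases le_or_gt u s with hus | hsu
    exacts [Or.inl ⟨hu.1, hus⟩, Or.inr ⟨hsu, hu.2⟩]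
  have hcard := (Finset.card_le_card hsub).trans (Finset.card_union_le _ _)
  rw [Int.card_Ioc] at hcard
  unfold rankOf
  omega

theorem exists_steep_seg_of_onSeg_rankOf (S : Finset ℤ) {ε : ℝ} (hε : 0 < ε) (σ : Seg) :
    ∃ τ, IsSteep τ ∧ ∀ s ∈ S, (∃ q, onSeg σ q ∧ q.2 = s ∧ |q.1 - rankOf S s| ≤ ε) →
      ∃ q, onSeg τ q ∧ max |(rankOf S s : ℝ) - q.1| |(s : ℝ) - q.2| ≤ ε := by
  classical
  have hmono : ∀ s : ℤ, ∀ t : ℤ, (s : ℝ) ≤ t →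
      0 ≤ (rankOf S t : ℝ) - rankOf S s ∧ (rankOf S t : ℝ) - rankOf S s ≤ t - s := by
    intro s t hst
    have hst : s ≤ t := by exact_mod_cast hst
    exact ⟨sub_nonneg.2 (by exact_mod_cast rankOf_mono S hst),
      by exact_mod_cast rankOf_sub_rankOf_le S hst⟩
  obtain ⟨τ, hτ, hcov⟩ := exists_steep_seg_of_onSeg (σ := σ) (x := fun s => (rankOf S s : ℝ))
    (y := fun s : ℤ => (s : ℝ)) (T := S.filter fun s : ℤ => ∃ q, onSeg σ q ∧ q.2 = s ∧
      |q.1 - rankOf S s| ≤ ε) hε (fun s _ t _ => hmono s t) fun s hs => (Finset.mem_filter.1 hs).2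
  exact ⟨τ, hτ, fun s hs hq => hcov s (Finset.mem_filter.2 ⟨hs, hq⟩)⟩

/-- The minimum complexity of an `ε`-cover of `S` is at most the minimum complexity of a
PGM index of `S` with parameter `ε`: for every PGM index `G` there is an `ε`-cover with
at most as many segments. -/
theorem stmt11 (S : Finset ℤ) (ε : ℕ) (hε : 0 < ε)
    (G : Finset Seg) (hG : IsPGM S ε G) :
    ∃ F : Finset Seg, IsCover S ε F ∧ F.card ≤ G.card := by
  choose τ hτsteep hτ using exists_steep_seg_of_onSeg_rankOf S (Nat.cast_pos.2 hε)
  refine ⟨G.image τ, ⟨?_, fun s hs => ?_⟩, Finset.card_image_le⟩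
  · simp only [Finset.mem_image]
    rintro _ ⟨σ, -, rfl⟩
    exact hτsteep σ
  · obtain ⟨σ, hσ, hq⟩ := hG.2 s hs
    exact ⟨τ σ, Finset.mem_image_of_mem τ hσ, hτ σ s hs hq⟩
end
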